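/- Let A be a k-subalgebra of k[x] with field of fractions K, let Φ ∈ A[y] be nonzero, g ∈ k[x] nonzero, and w ∈ Γ^n. Assume g^w is algebraic over K^w and that the ideal I(A^w, g^w) of A^w[y] is principal, with generator P(A^w, g^w). Then there exists H ∈ A^w[y] with H ∉ I(A^w, g^w) such that Φ^{w,g} = P(A^w, g^w)^m · H, where m = m_w^g(Φ). -/

import Mathlib

/-!
Evaluating the leading form `Φ^{w,g}` at `g^w` gives the `deg_w^g Φ`-homogeneous component of
`Φ(g)`, so it vanishes exactly when `deg_w Φ(g) < deg_w^g Φ`. When it vanishes, the maximum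
defining `deg_w^g Φ` is attained at some `i ≥ 1`, and then taking leading forms commutes with
`∂_y`. Hence the first `m = m_w^g(Φ)` derivatives of `Φ^{w,g}` vanish at `g^w` and the `m`-th
does not. Over a domain of characteristic zero, a generator `P` of the ideal of polynomials
vanishing at a point is prime of positive degree, so `P ∤ P'` and differentiation lowers the
`P`-multiplicity by exactly one; thus the multiplicity of `P` in a polynomial is its order of
vanishing at the point.
-/

open MvPolynomial Polynomial

set_option synthInstance.maxHeartbeats 1000000
set_option maxHeartbeats 1000000

variable {k : Type*} [Field k] [CharZero k] {n : ℕ}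
variable {Γ : Type*} [AddCommGroup Γ] [LinearOrder Γ] [IsOrderedAddMonoid Γ]

/-- The `w`-degree of a multivariate polynomial, with `wdeg w 0 = ⊥ = -∞`. -/
noncomputable def wdeg (w : Fin n → Γ) (f : MvPolynomial (Fin n) k) : WithBot Γ :=
  f.support.sup fun d => ((∑ i, d i • w i : Γ) : WithBot Γ)

/-- The leading `w`-homogeneous form `f^w` of `f`. -/
noncomputable def lform (w : Fin n → Γ) (f : MvPolynomial (Fin n) k) :
    MvPolynomial (Fin n) k :=
  letI : DecidableEq (WithBot Γ) := Classical.decEq _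
  ∑ d ∈ f.support.filter
      (fun d => ((∑ i, d i • w i : Γ) : WithBot Γ) = wdeg w f),
    MvPolynomial.monomial d (f.coeff d)

/-- `deg_w^g Φ = max_i deg_w (φ_i g^i)` for `Φ = Σ_i φ_i y^i`. -/
noncomputable def wdegG (w : Fin n → Γ) (g : MvPolynomial (Fin n) k)
    (Φ : Polynomial (MvPolynomial (Fin n) k)) : WithBot Γ :=
  Φ.support.sup fun i => wdeg w (Φ.coeff i * g ^ i)

/-- The leading form `Φ^{w,g}` of `Φ` for the grading in which `x_j` has weight `w_j`
and `y` has weight `deg_w g`: the sum of `φ_i^w y^i` over those `i` with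
`deg_w (φ_i g^i) = deg_w^g Φ`. -/
noncomputable def pLform (w : Fin n → Γ) (g : MvPolynomial (Fin n) k)
    (Φ : Polynomial (MvPolynomial (Fin n) k)) : Polynomial (MvPolynomial (Fin n) k) :=
  letI : DecidableEq (WithBot Γ) := Classical.decEq _
  ∑ i ∈ Φ.support.filter (fun i => wdeg w (Φ.coeff i * g ^ i) = wdegG w g Φ),
    Polynomial.C (lform w (Φ.coeff i)) * Polynomial.X ^ i

/-- `m_w^g(Φ) = min { i : deg_w^g (∂_y^i Φ) = deg_w ((∂_y^i Φ)(g)) }`. -/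
noncomputable def mwg (w : Fin n → Γ) (g : MvPolynomial (Fin n) k)
    (Φ : Polynomial (MvPolynomial (Fin n) k)) : ℕ :=
  sInf {i : ℕ |
    wdegG w g (Polynomial.derivative^[i] Φ) = wdeg w ((Polynomial.derivative^[i] Φ).eval g)}

/-- The `w`-degree of the differential form `dh_1 ∧ ⋯ ∧ dh_s`: the maximum over all
`s`-tuples of indices of the `w`-degree of the corresponding `s × s` Jacobian minor
plus the sum of the corresponding weights (noninjective tuples contribute `⊥`). -/
noncomputable def wedgeDeg (w : Fin n → Γ) {s : ℕ} (h : Fin s → MvPolynomial (Fin n) k) :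
    WithBot Γ :=
  Finset.univ.sup fun e : Fin s → Fin n =>
    wdeg w (Matrix.det (Matrix.of fun a b : Fin s => MvPolynomial.pderiv (e b) (h a)))
      + ((∑ b, w (e b) : Γ) : WithBot Γ)

/-- The initial algebra `A^w`: the `k`-subalgebra generated by `f^w` for `f ∈ A \ {0}`. -/
noncomputable def initAlg (w : Fin n → Γ) (A : Subalgebra k (MvPolynomial (Fin n) k)) :
    Subalgebra k (MvPolynomial (Fin n) k) :=
  Algebra.adjoin k (lform w '' ((A : Set (MvPolynomial (Fin n) k)) \ {0}))

/-- The field of fractions `K^w` of `A^w`, realized as a subfield of the fraction field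
of `k[x]`. -/
noncomputable def KW (w : Fin n → Γ) (A : Subalgebra k (MvPolynomial (Fin n) k)) :
    Subfield (FractionRing (MvPolynomial (Fin n) k)) :=
  Subfield.closure
    (algebraMap (MvPolynomial (Fin n) k) (FractionRing (MvPolynomial (Fin n) k)) ''
      (initAlg w A : Set (MvPolynomial (Fin n) k)))

/-- The field of fractions of a subalgebra `A` of `k[x]`, realized as a subfield of the
fraction field of `k[x]`. -/
noncomputable def fracSub (A : Subalgebra k (MvPolynomial (Fin n) k)) :
    Subfield (FractionRing (MvPolynomial (Fin n) k)) :=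
  Subfield.closure
    (algebraMap (MvPolynomial (Fin n) k) (FractionRing (MvPolynomial (Fin n) k)) ''
      (A : Set (MvPolynomial (Fin n) k)))

/-- A polynomial is `w`-homogeneous if all its monomials have the same `w`-degree. -/
def IsWHom (w : Fin n → Γ) (f : MvPolynomial (Fin n) k) : Prop :=
  ∃ γ : Γ, ∀ d ∈ f.support, (∑ i, d i • w i : Γ) = γ

theorem multiplicity_pow_mul_of_not_dvd {α : Type*} [CommMonoidWithZero α] [IsCancelMulZero α]
    {p a : α} (hp : p ≠ 0) (ha : ¬p ∣ a) (e : ℕ) : multiplicity p (p ^ e * a) = e :=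
  multiplicity_eq_of_dvd_of_not_dvd (dvd_mul_right _ _)
    (by rwa [pow_succ, mul_dvd_mul_iff_left (pow_ne_zero e hp)])

namespace Polynomial

variable {S : Type*} [CommRing S] [IsDomain S]

theorem finiteMultiplicity_of_natDegree_pos {P Φ : S[X]} (hP : 0 < P.natDegree)
    (hΦ : Φ ≠ 0) : FiniteMultiplicity P Φ := by
  refine ⟨Φ.natDegree, fun hdvd => ?_⟩
  have := natDegree_le_of_dvd hdvd hΦ
  rw [natDegree_pow] at this
  nlinarith

theorem prime_and_natDegree_pos_of_ker_aeval_eq_span {S T : Type*} [CommRing S]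
    [CommRing T] [IsDomain T] [Algebra S T] [FaithfulSMul S T] {x : T} {P : S[X]}
    (hP : RingHom.ker (aeval x : S[X] →ₐ[S] T) = Ideal.span {P}) (hP0 : P ≠ 0) :
    Prime P ∧ 0 < P.natDegree := by
  refine ⟨(Ideal.span_singleton_prime hP0).1 (hP ▸ RingHom.ker_isPrime _), ?_⟩
  by_contra hdeg
  rw [not_lt, Nat.le_zero] at hdeg
  have hPx : aeval x P = 0 := by
    rw [← RingHom.mem_ker, hP]
    exact Ideal.mem_span_singleton_self P
  rw [eq_C_of_natDegree_eq_zero hdeg, aeval_C,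
    (FaithfulSMul.algebraMap_injective S T).eq_iff' (map_zero _)] at hPx
  exact hP0 (by rw [eq_C_of_natDegree_eq_zero hdeg, hPx, C_0])

variable [CharZero S]

theorem exists_derivative_pow_succ_mul_eq_pow_mul_not_dvd {P : S[X]} (hP : Prime P)
    (hdeg : 0 < P.natDegree) {U : S[X]} (hU : ¬P ∣ U) (e : ℕ) :
    ∃ W, derivative (P ^ (e + 1) * U) = P ^ e * W ∧ ¬P ∣ W := by
  refine ⟨C ((e + 1 : ℕ) : S) * derivative P * U + P * derivative U, ?_, ?_⟩
  · rw [derivative_mul, derivative_pow]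
    push_cast
    ring
  · have hP' : ¬P ∣ derivative P :=
      not_dvd_of_natDegree_lt (derivative_eq_zero.not.2 hdeg.ne')
        (natDegree_derivative_lt hdeg.ne')
    have hC : ¬P ∣ C ((e + 1 : ℕ) : S) :=
      not_dvd_of_natDegree_lt (C_ne_zero.2 (Nat.cast_ne_zero.2 e.succ_ne_zero))
        (by rwa [natDegree_C])
    rw [dvd_add_left (dvd_mul_right P _)]
    intro h
    rcases hP.dvd_or_dvd h with h | h
    · exact (hP.dvd_or_dvd h).elim hC hP'
    · exact hU h

theorem exists_eq_pow_succ_mul_of_derivative_eq_pow_mul {P Φ H : S[X]} (hP : Prime P)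
    (hdeg : 0 < P.natDegree) (hΦ : Φ ≠ 0) (hPΦ : P ∣ Φ) {m : ℕ}
    (hΦ' : derivative Φ = P ^ m * H) (hH : ¬P ∣ H) :
    ∃ U, Φ = P ^ (m + 1) * U ∧ ¬P ∣ U := by
  obtain ⟨U, hΦU, hU⟩ :=
    (finiteMultiplicity_of_natDegree_pos hdeg hΦ).exists_eq_pow_mul_and_not_dvd
  obtain ⟨e, he⟩ : ∃ e, multiplicity P Φ = e + 1 :=
    Nat.exists_eq_add_one.2 (Nat.pos_of_ne_zero (multiplicity_eq_zero.not.2 (not_not.2 hPΦ)))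
  rw [he] at hΦU
  obtain ⟨W, hΦW, hW⟩ := exists_derivative_pow_succ_mul_eq_pow_mul_not_dvd hP hdeg hU e
  have hem : e = m := by
    rw [← multiplicity_pow_mul_of_not_dvd hP.ne_zero hW e, ← hΦW, ← hΦU, hΦ',
      multiplicity_pow_mul_of_not_dvd hP.ne_zero hH]
  exact ⟨U, hem ▸ hΦU, hU⟩

theorem exists_eq_pow_mul_of_aeval_iterate_derivative {T : Type*} [CommRing T]
    [IsDomain T] [Algebra S T] [FaithfulSMul S T] {x : T} {P : S[X]}
    (hP : RingHom.ker (aeval x : S[X] →ₐ[S] T) = Ideal.span {P}) {Ψ : S[X]} {m : ℕ}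
    (hvan : ∀ i < m, aeval x (derivative^[i] Ψ) = 0) (hm : aeval x (derivative^[m] Ψ) ≠ 0) :
    ∃ H, Ψ = P ^ m * H ∧ aeval x H ≠ 0 := by
  have dvd_iff (Q : S[X]) : P ∣ Q ↔ aeval x Q = 0 := by
    rw [← Ideal.mem_span_singleton, ← hP, RingHom.mem_ker]
  suffices ∃ H, Ψ = P ^ m * H ∧ ¬P ∣ H by simpa only [dvd_iff] using this
  induction m generalizing Ψ with
  | zero => exact ⟨Ψ, (one_mul Ψ).symm, (dvd_iff Ψ).not.2 hm⟩
  | succ m ih =>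
    obtain ⟨H, hΨ'H, hH⟩ := ih (Ψ := derivative Ψ) (fun i hi => hvan (i + 1) (by omega)) hm
    have hΨ : Ψ ≠ 0 := by
      rintro rfl
      simp at hm
    have hPΨ : P ∣ Ψ := (dvd_iff Ψ).2 (hvan 0 m.succ_pos)
    have hP0 : P ≠ 0 := by
      rintro rfl
      exact hΨ (zero_dvd_iff.1 hPΨ)
    obtain ⟨hPprime, hdeg⟩ := prime_and_natDegree_pos_of_ker_aeval_eq_span hP hP0
    exact exists_eq_pow_succ_mul_of_derivative_eq_pow_mul hPprime hdeg hΨ hPΨ hΨ'H hH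

end Polynomial

section LeadingForm

-- `k` and `Γ` are re-declared in each section, so that every lemma assumes only what it uses.

variable {k : Type*} [Field k] {n : ℕ} {Γ : Type*} [AddCommGroup Γ] [LinearOrder Γ]
  {w : Fin n → Γ} {f : MvPolynomial (Fin n) k}

theorem wdeg_le_iff {b : WithBot Γ} :
    wdeg w f ≤ b ↔ ∀ d ∈ f.support, (Finsupp.weight w d : WithBot Γ) ≤ b := by
  simp only [wdeg, Finset.sup_le_iff, Finsupp.weight_eq_sum]

theorem le_wdeg {d : Fin n →₀ ℕ} (hd : d ∈ f.support) :
    (Finsupp.weight w d : WithBot Γ) ≤ wdeg w f :=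
  wdeg_le_iff.1 le_rfl d hd

theorem coeff_eq_zero_of_wdeg_lt {d : Fin n →₀ ℕ} (h : wdeg w f < Finsupp.weight w d) :
    MvPolynomial.coeff d f = 0 :=
  not_ne_iff.1 fun hd => (le_wdeg (MvPolynomial.mem_support_iff.2 hd)).not_gt h

theorem wdeg_eq_bot_iff : wdeg w f = ⊥ ↔ f = 0 := by
  simp only [wdeg, Finset.sup_eq_bot_iff, WithBot.coe_ne_bot, MvPolynomial.mem_support_iff,
    imp_false, not_not, MvPolynomial.ext_iff, MvPolynomial.coeff_zero]

theorem wdeg_zero : wdeg w (0 : MvPolynomial (Fin n) k) = ⊥ :=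
  wdeg_eq_bot_iff.2 rfl

theorem exists_wdeg_eq_coe (hf : f ≠ 0) : ∃ γ : Γ, wdeg w f = γ :=
  WithBot.ne_bot_iff_exists.1 (wdeg_eq_bot_iff.not.2 hf) |>.imp fun _ h => h.symm

theorem wdeg_smul {c : k} (hc : c ≠ 0) : wdeg w (c • f) = wdeg w f := by
  rw [wdeg, wdeg, support_smul_eq hc]

theorem lform_eq_weightedHomogeneousComponent {γ : Γ} (h : wdeg w f = γ) :
    lform w f = weightedHomogeneousComponent w γ f := by
  classical
  rw [lform, weightedHomogeneousComponent_apply, h]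
  congr 1
  ext d
  simp only [Finset.mem_filter, WithBot.coe_inj, Finsupp.weight_eq_sum]

theorem lform_zero : lform w (0 : MvPolynomial (Fin n) k) = 0 := by
  simp [lform]

theorem weightedHomogeneousComponent_eq_zero_of_wdeg_lt {γ : Γ} (h : wdeg w f < γ) :
    weightedHomogeneousComponent w γ f = 0 :=
  weightedHomogeneousComponent_eq_zero' γ f fun _ hd hdγ =>
    MvPolynomial.mem_support_iff.1 hd (coeff_eq_zero_of_wdeg_lt (hdγ ▸ h))

theorem wdeg_eq_iff_weightedHomogeneousComponent_ne_zero {γ : Γ} (h : wdeg w f ≤ γ) :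
    wdeg w f = γ ↔ weightedHomogeneousComponent w γ f ≠ 0 := by
  classical
  refine ⟨fun hγ => ?_, fun h0 => h.eq_of_not_lt fun hlt =>
    h0 (weightedHomogeneousComponent_eq_zero_of_wdeg_lt hlt)⟩
  have hf : f ≠ 0 := by
    rintro rfl
    exact WithBot.bot_ne_coe (wdeg_zero.symm.trans hγ)
  obtain ⟨d, hd, hsup⟩ := Finset.exists_mem_eq_sup f.support (support_nonempty.2 hf)
    fun d => ((∑ i, d i • w i : Γ) : WithBot Γ)
  rw [← wdeg, hγ, WithBot.coe_inj, ← Finsupp.weight_eq_sum] at hsup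
  intro h0
  have := congrArg (MvPolynomial.coeff d) h0
  rw [coeff_weightedHomogeneousComponent, if_pos hsup.symm, MvPolynomial.coeff_zero] at this
  exact MvPolynomial.mem_support_iff.1 hd this

theorem lform_ne_zero (hf : f ≠ 0) : lform w f ≠ 0 := by
  obtain ⟨γ, hγ⟩ := exists_wdeg_eq_coe (w := w) hf
  rw [lform_eq_weightedHomogeneousComponent hγ]
  exact (wdeg_eq_iff_weightedHomogeneousComponent_ne_zero hγ.le).1 hγ

theorem lform_one : lform w (1 : MvPolynomial (Fin n) k) = 1 := by
  have h : wdeg w (1 : MvPolynomial (Fin n) k) = ↑(0 : Γ) := by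
    simp [wdeg, MvPolynomial.support_one]
  rw [lform_eq_weightedHomogeneousComponent h,
    (isWeightedHomogeneous_one (R := k) w).weightedHomogeneousComponent_same]

theorem lform_smul (c : k) (f : MvPolynomial (Fin n) k) : lform w (c • f) = c • lform w f := by
  rcases eq_or_ne c 0 with rfl | hc
  · rw [zero_smul, zero_smul, lform_zero]
  rcases eq_or_ne f 0 with rfl | hf
  · rw [smul_zero, lform_zero, smul_zero]
  obtain ⟨γ, hγ⟩ := exists_wdeg_eq_coe (w := w) hf
  rw [lform_eq_weightedHomogeneousComponent hγ,
    lform_eq_weightedHomogeneousComponent ((wdeg_smul hc).trans hγ), map_smul]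

theorem wdeg_sum_le {ι : Type*} (s : Finset ι) (F : ι → MvPolynomial (Fin n) k) :
    wdeg w (∑ i ∈ s, F i) ≤ s.sup fun i => wdeg w (F i) := by
  classical
  refine wdeg_le_iff.2 fun d hd => ?_
  obtain ⟨i, hi, hd⟩ := Finset.mem_biUnion.1 (MvPolynomial.support_sum hd)
  exact (le_wdeg hd).trans (Finset.le_sup (f := fun i => wdeg w (F i)) hi)

theorem lform_mem_initAlg {A : Subalgebra k (MvPolynomial (Fin n) k)} (hf : f ∈ A) :
    lform w f ∈ initAlg w A := by
  rcases eq_or_ne f 0 with rfl | hf0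
  · rw [lform_zero]
    exact zero_mem _
  · exact Algebra.subset_adjoin ⟨f, ⟨hf, hf0⟩, rfl⟩

variable [IsOrderedAddMonoid Γ]

theorem wdeg_mul_le (f g : MvPolynomial (Fin n) k) : wdeg w (f * g) ≤ wdeg w f + wdeg w g := by
  classical
  refine wdeg_le_iff.2 fun d hd => ?_
  obtain ⟨a, ha, b, hb, rfl⟩ := Finset.mem_add.1 (support_mul f g hd)
  rw [map_add, WithBot.coe_add]
  exact add_le_add (le_wdeg ha) (le_wdeg hb)

theorem weightedHomogeneousComponent_mul_of_wdeg_le {f g : MvPolynomial (Fin n) k} {α β : Γ}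
    (hf : wdeg w f ≤ α) (hg : wdeg w g ≤ β) :
    weightedHomogeneousComponent w (α + β) (f * g) =
      weightedHomogeneousComponent w α f * weightedHomogeneousComponent w β g := by
  classical
  ext d
  simp only [coeff_weightedHomogeneousComponent, MvPolynomial.coeff_mul]
  split_ifs with hd
  · refine Finset.sum_congr rfl fun p hp => ?_
    have hsum : Finsupp.weight w p.1 + Finsupp.weight w p.2 = α + β := by
      rw [← map_add, Finset.HasAntidiagonal.mem_antidiagonal.1 hp, hd]
    rcases lt_trichotomy (Finsupp.weight w p.1) α with hlt | heq | hgt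
    · have hβ : β < Finsupp.weight w p.2 :=
        lt_of_add_lt_add_left (a := α) (hsum ▸ add_lt_add_left hlt _)
      rw [coeff_eq_zero_of_wdeg_lt (hg.trans_lt (WithBot.coe_lt_coe.2 hβ)), mul_zero,
        if_neg hlt.ne, zero_mul]
    · rw [if_pos heq, if_pos (add_left_cancel (heq ▸ hsum))]
    · rw [coeff_eq_zero_of_wdeg_lt (hf.trans_lt (WithBot.coe_lt_coe.2 hgt)), zero_mul,
        if_neg hgt.ne', zero_mul]
  · refine (Finset.sum_eq_zero fun p hp => ?_).symm
    rw [← Finset.HasAntidiagonal.mem_antidiagonal.1 hp, map_add] at hd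
    split_ifs with h1 h2
    · exact (hd (by rw [h1, h2])).elim
    all_goals simp only [mul_zero, zero_mul]

theorem wdeg_mul (f g : MvPolynomial (Fin n) k) : wdeg w (f * g) = wdeg w f + wdeg w g := by
  rcases eq_or_ne f 0 with rfl | hf
  · rw [zero_mul, wdeg_zero, WithBot.bot_add]
  rcases eq_or_ne g 0 with rfl | hg
  · rw [mul_zero, wdeg_zero, WithBot.add_bot]
  obtain ⟨α, hα⟩ := exists_wdeg_eq_coe (w := w) hf
  obtain ⟨β, hβ⟩ := exists_wdeg_eq_coe (w := w) hg
  have hle : wdeg w (f * g) ≤ ↑(α + β) := by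
    rw [WithBot.coe_add, ← hα, ← hβ]
    exact wdeg_mul_le f g
  rw [hα, hβ, ← WithBot.coe_add, wdeg_eq_iff_weightedHomogeneousComponent_ne_zero hle,
    weightedHomogeneousComponent_mul_of_wdeg_le hα.le hβ.le,
    ← lform_eq_weightedHomogeneousComponent hα, ← lform_eq_weightedHomogeneousComponent hβ]
  exact mul_ne_zero (lform_ne_zero hf) (lform_ne_zero hg)

theorem lform_mul (f g : MvPolynomial (Fin n) k) : lform w (f * g) = lform w f * lform w g := by
  rcases eq_or_ne f 0 with rfl | hf
  · rw [zero_mul, lform_zero, zero_mul]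
  rcases eq_or_ne g 0 with rfl | hg
  · rw [mul_zero, lform_zero, mul_zero]
  obtain ⟨α, hα⟩ := exists_wdeg_eq_coe (w := w) hf
  obtain ⟨β, hβ⟩ := exists_wdeg_eq_coe (w := w) hg
  rw [lform_eq_weightedHomogeneousComponent (by rw [wdeg_mul, hα, hβ, WithBot.coe_add]),
    weightedHomogeneousComponent_mul_of_wdeg_le hα.le hβ.le,
    lform_eq_weightedHomogeneousComponent hα, lform_eq_weightedHomogeneousComponent hβ]

theorem lform_pow (f : MvPolynomial (Fin n) k) (i : ℕ) : lform w (f ^ i) = lform w f ^ i := by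
  induction i with
  | zero => rw [pow_zero, pow_zero, lform_one]
  | succ i ih => rw [pow_succ, pow_succ, lform_mul, ih]

end LeadingForm

section LeadingFormInY

variable {k : Type*} [Field k] {n : ℕ} {Γ : Type*} [AddCommGroup Γ] [LinearOrder Γ]
  {w : Fin n → Γ} {g : MvPolynomial (Fin n) k} {Φ : (MvPolynomial (Fin n) k)[X]}

theorem wdegG_le_iff {b : WithBot Γ} :
    wdegG w g Φ ≤ b ↔ ∀ i, wdeg w (Φ.coeff i * g ^ i) ≤ b := by
  refine Finset.sup_le_iff.trans ⟨fun h i => ?_, fun h i _ => h i⟩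
  by_cases hi : i ∈ Φ.support
  · exact h i hi
  · rw [Polynomial.notMem_support_iff.1 hi, zero_mul, wdeg_zero]
    exact bot_le

theorem le_wdegG (i : ℕ) : wdeg w (Φ.coeff i * g ^ i) ≤ wdegG w g Φ :=
  wdegG_le_iff.1 le_rfl i

theorem wdegG_C (c : MvPolynomial (Fin n) k) : wdegG w g (C c) = wdeg w c := by
  rcases eq_or_ne c 0 with rfl | hc
  · rw [map_zero, wdegG, Polynomial.support_zero, Finset.sup_empty, wdeg_zero]
  · rw [wdegG, support_C hc, Finset.sup_singleton, coeff_C_zero, pow_zero, mul_one]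

theorem wdeg_eval_le : wdeg w (Φ.eval g) ≤ wdegG w g Φ := by
  rw [eval_eq_sum, Polynomial.sum_def]
  exact (wdeg_sum_le _ _).trans (Finset.sup_le fun i _ => le_wdegG i)

theorem exists_wdegG_eq_coe (hΦ : Φ ≠ 0) (hg : g ≠ 0) : ∃ δ : Γ, wdegG w g Φ = δ := by
  obtain ⟨i, hi, hsup⟩ := Finset.exists_mem_eq_sup Φ.support (support_nonempty.2 hΦ)
    fun i => wdeg w (Φ.coeff i * g ^ i)
  obtain ⟨δ, hδ⟩ := exists_wdeg_eq_coe (w := w)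
    (mul_ne_zero (Polynomial.mem_support_iff.1 hi) (pow_ne_zero i hg))
  exact ⟨δ, hsup.trans hδ⟩

theorem coeff_pLform (j : ℕ) : (pLform w g Φ).coeff j =
    if wdeg w (Φ.coeff j * g ^ j) = wdegG w g Φ then lform w (Φ.coeff j) else 0 := by
  classical
  simp only [pLform, finsetSum_coeff, coeff_C_mul_X_pow, Finset.sum_ite_eq, Finset.mem_filter]
  by_cases hj : j ∈ Φ.support
  · simp [hj]
  · simp [Polynomial.notMem_support_iff.1 hj, hj, lform_zero]

theorem coeff_derivative_eq_smul (Φ : (MvPolynomial (Fin n) k)[X]) (j : ℕ) :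
    (derivative Φ).coeff j = ((j + 1 : ℕ) : k) • Φ.coeff (j + 1) := by
  rw [coeff_derivative, Nat.cast_smul_eq_nsmul, nsmul_eq_mul', Nat.cast_add_one]

theorem exists_ne_zero_wdeg_eq_wdegG (hΦ : Φ ≠ 0) (h : (pLform w g Φ).eval (lform w g) = 0) :
    ∃ i ≠ 0, wdeg w (Φ.coeff i * g ^ i) = wdegG w g Φ := by
  by_contra! hne
  obtain ⟨i, hi, hsup⟩ := Finset.exists_mem_eq_sup Φ.support (support_nonempty.2 hΦ)
    fun i => wdeg w (Φ.coeff i * g ^ i)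
  obtain rfl : i = 0 := by
    by_contra hi0
    exact hne i hi0 hsup.symm
  have hC : pLform w g Φ = Polynomial.C (lform w (Φ.coeff 0)) := by
    refine Polynomial.ext fun j => ?_
    rw [coeff_pLform, Polynomial.coeff_C]
    rcases eq_or_ne j 0 with rfl | hj
    · rw [if_pos (show _ = wdegG w g Φ from hsup.symm), if_pos rfl]
    · rw [if_neg (hne j hj), if_neg hj]
  rw [hC, Polynomial.eval_C] at h
  exact lform_ne_zero (Polynomial.mem_support_iff.1 hi) h

theorem pLform_lifts {A : Subalgebra k (MvPolynomial (Fin n) k)} (hΦA : ∀ i, Φ.coeff i ∈ A) :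
    pLform w g Φ ∈ lifts (algebraMap (initAlg w A) (MvPolynomial (Fin n) k)) := by
  refine (lifts_iff_coeff_lifts _).2 fun j => ?_
  rw [coeff_pLform]
  split_ifs
  · exact ⟨⟨_, lform_mem_initAlg (hΦA j)⟩, rfl⟩
  · exact ⟨0, map_zero _⟩

variable [IsOrderedAddMonoid Γ]

theorem eval_pLform {δ : Γ} (hδ : wdegG w g Φ = δ) :
    (pLform w g Φ).eval (lform w g) = weightedHomogeneousComponent w δ (Φ.eval g) := by
  classical
  rw [pLform, eval_finsetSum, eval_eq_sum, Polynomial.sum_def, map_sum, Finset.sum_filter]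
  refine Finset.sum_congr rfl fun i _ => ?_
  rw [eval_C_mul, eval_X_pow]
  split_ifs with h
  · rw [← lform_pow, ← lform_mul, lform_eq_weightedHomogeneousComponent (h.trans hδ)]
  · exact (weightedHomogeneousComponent_eq_zero_of_wdeg_lt
      (lt_of_le_of_ne (hδ ▸ le_wdegG i) (hδ ▸ h))).symm

theorem eval_pLform_ne_zero_iff (hΦ : Φ ≠ 0) (hg : g ≠ 0) :
    (pLform w g Φ).eval (lform w g) ≠ 0 ↔ wdegG w g Φ = wdeg w (Φ.eval g) := by
  obtain ⟨δ, hδ⟩ := exists_wdegG_eq_coe (w := w) hΦ hg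
  rw [eval_pLform hδ, hδ, eq_comm,
    wdeg_eq_iff_weightedHomogeneousComponent_ne_zero (hδ ▸ wdeg_eval_le)]

variable [CharZero k]

theorem wdeg_coeff_derivative_mul_add (Φ : (MvPolynomial (Fin n) k)[X]) (j : ℕ) :
    wdeg w ((derivative Φ).coeff j * g ^ j) + wdeg w g =
      wdeg w (Φ.coeff (j + 1) * g ^ (j + 1)) := by
  rw [coeff_derivative_eq_smul, smul_mul_assoc, wdeg_smul (Nat.cast_ne_zero.2 j.succ_ne_zero),
    ← wdeg_mul, pow_succ, mul_assoc]

theorem wdegG_derivative_add {i : ℕ} (hi : i ≠ 0)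
    (h : wdeg w (Φ.coeff i * g ^ i) = wdegG w g Φ) :
    wdegG w g (derivative Φ) + wdeg w g = wdegG w g Φ := by
  obtain ⟨j, rfl⟩ := Nat.exists_eq_succ_of_ne_zero hi
  refine le_antisymm ?_ ?_
  · rw [wdegG, Finset.apply_sup_eq_sup_comp_of_linearOrder (· + wdeg w g)
      (fun _ _ hab => add_le_add_left hab _) (WithBot.bot_add _)]
    exact Finset.sup_le fun j _ => (wdeg_coeff_derivative_mul_add Φ j).trans_le (le_wdegG _)
  · rw [← h, ← wdeg_coeff_derivative_mul_add]
    exact add_le_add_left (le_wdegG j) _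

theorem pLform_derivative (hΦ : Φ ≠ 0) (hg : g ≠ 0)
    (h : (pLform w g Φ).eval (lform w g) = 0) :
    pLform w g (derivative Φ) = derivative (pLform w g Φ) := by
  obtain ⟨i, hi, hiΦ⟩ := exists_ne_zero_wdeg_eq_wdegG hΦ h
  refine Polynomial.ext fun j => ?_
  have hcond : wdeg w (Φ.coeff (j + 1) * g ^ (j + 1)) = wdegG w g Φ ↔
      wdeg w ((derivative Φ).coeff j * g ^ j) = wdegG w g (derivative Φ) := by
    rw [← wdegG_derivative_add hi hiΦ, ← wdeg_coeff_derivative_mul_add,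
      WithBot.add_right_inj (wdeg_eq_bot_iff.not.2 hg)]
  simp only [coeff_pLform, coeff_derivative (pLform w g Φ), hcond]
  split_ifs
  · rw [coeff_derivative_eq_smul, lform_smul, Nat.cast_smul_eq_nsmul, nsmul_eq_mul',
      Nat.cast_add_one]
  · rw [zero_mul]

end LeadingFormInY

section Mwg

variable {k : Type*} [Field k] {n : ℕ} {Γ : Type*} [AddCommGroup Γ] [LinearOrder Γ]
  {w : Fin n → Γ} {g : MvPolynomial (Fin n) k} {Φ : (MvPolynomial (Fin n) k)[X]}

theorem wdegG_eq_wdeg_eval_of_natDegree_eq_zero (h : Φ.natDegree = 0) :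
    wdegG w g Φ = wdeg w (Φ.eval g) := by
  rw [eq_C_of_natDegree_eq_zero h, wdegG_C, Polynomial.eval_C]

theorem wdegG_ne_wdeg_eval_of_lt_mwg {i : ℕ} (hi : i < mwg w g Φ) :
    wdegG w g (derivative^[i] Φ) ≠ wdeg w ((derivative^[i] Φ).eval g) :=
  Nat.notMem_of_lt_sInf hi

theorem iterate_derivative_ne_zero_of_lt_mwg {i : ℕ} (hi : i < mwg w g Φ) :
    derivative^[i] Φ ≠ 0 := fun h0 =>
  wdegG_ne_wdeg_eval_of_lt_mwg hi
    (wdegG_eq_wdeg_eval_of_natDegree_eq_zero (by rw [h0, natDegree_zero]))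

variable [CharZero k]

theorem wdegG_eq_wdeg_eval_mwg_and_ne_zero (hΦ : Φ ≠ 0) :
    wdegG w g (derivative^[mwg w g Φ] Φ) = wdeg w ((derivative^[mwg w g Φ] Φ).eval g) ∧
      derivative^[mwg w g Φ] Φ ≠ 0 := by
  refine ⟨Nat.sInf_mem (s := {i | wdegG w g (derivative^[i] Φ) =
      wdeg w ((derivative^[i] Φ).eval g)})
    ⟨Φ.natDegree + 1, wdegG_eq_wdeg_eval_of_natDegree_eq_zero ?_⟩, fun h0 => ?_⟩
  · rw [iterate_derivative_eq_zero (Nat.lt_succ_self _), natDegree_zero]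
  obtain ⟨j, hj⟩ : ∃ j, mwg w g Φ = j + 1 :=
    Nat.exists_eq_succ_of_ne_zero fun hm => hΦ (by rwa [hm] at h0)
  refine wdegG_ne_wdeg_eval_of_lt_mwg (hj ▸ j.lt_add_one)
    (wdegG_eq_wdeg_eval_of_natDegree_eq_zero (derivative_eq_zero.1 ?_))
  rwa [← Function.iterate_succ_apply' derivative, Nat.succ_eq_add_one, ← hj]

variable [IsOrderedAddMonoid Γ]

theorem pLform_iterate_derivative (hg : g ≠ 0) :
    ∀ i ≤ mwg w g Φ, pLform w g (derivative^[i] Φ) = derivative^[i] (pLform w g Φ) := by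
  intro i
  induction i with
  | zero => exact fun _ => rfl
  | succ i ih =>
    intro hi
    replace hi : i < mwg w g Φ := hi
    have hΦi := iterate_derivative_ne_zero_of_lt_mwg hi
    rw [Function.iterate_succ_apply', Function.iterate_succ_apply', ← ih hi.le,
      pLform_derivative hΦi hg
        (not_ne_iff.1 ((eval_pLform_ne_zero_iff hΦi hg).not.2 (wdegG_ne_wdeg_eval_of_lt_mwg hi)))]

theorem eval_iterate_derivative_pLform_of_lt_mwg (hg : g ≠ 0) {i : ℕ} (hi : i < mwg w g Φ) :
    (derivative^[i] (pLform w g Φ)).eval (lform w g) = 0 := by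
  have hΦi := iterate_derivative_ne_zero_of_lt_mwg hi
  rw [← pLform_iterate_derivative hg i hi.le]
  exact not_ne_iff.1 ((eval_pLform_ne_zero_iff hΦi hg).not.2 (wdegG_ne_wdeg_eval_of_lt_mwg hi))

theorem eval_iterate_derivative_pLform_mwg_ne_zero (hΦ : Φ ≠ 0) (hg : g ≠ 0) :
    (derivative^[mwg w g Φ] (pLform w g Φ)).eval (lform w g) ≠ 0 := by
  obtain ⟨hm, hΦm⟩ := wdegG_eq_wdeg_eval_mwg_and_ne_zero (w := w) (g := g) hΦ
  rw [← pLform_iterate_derivative hg _ le_rfl]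
  exact (eval_pLform_ne_zero_iff hΦm hg).2 hm

end Mwg

theorem stmt6_general (A : Subalgebra k (MvPolynomial (Fin n) k))
    (Φ : Polynomial (MvPolynomial (Fin n) k)) (hΦ : Φ ≠ 0) (hΦA : ∀ i, Φ.coeff i ∈ A)
    (g : MvPolynomial (Fin n) k) (hg : g ≠ 0) (w : Fin n → Γ)
    (P : Polynomial (initAlg w A))
    (hP : RingHom.ker
        (Polynomial.aeval (lform w g) :
          Polynomial (initAlg w A) →ₐ[initAlg w A] MvPolynomial (Fin n) k)
      = Ideal.span {P}) :
    ∃ H : Polynomial (initAlg w A),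
      (Polynomial.aeval (lform w g) H : MvPolynomial (Fin n) k) ≠ 0 ∧
      pLform w g Φ =
        Polynomial.map (algebraMap (initAlg w A) (MvPolynomial (Fin n) k))
          (P ^ (mwg w g Φ) * H) := by
  obtain ⟨Ψ, hΨ⟩ := (mem_lifts _).1 (pLform_lifts (w := w) (g := g) hΦA)
  have aeval_Ψ (i : ℕ) : aeval (lform w g) (derivative^[i] Ψ) =
      (derivative^[i] (pLform w g Φ)).eval (lform w g) := by
    rw [Polynomial.aeval_def, Polynomial.eval₂_eq_eval_map, ← iterate_derivative_map, hΨ]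
  obtain ⟨H, hΨH, hH⟩ := exists_eq_pow_mul_of_aeval_iterate_derivative hP (m := mwg w g Φ)
    (fun i hi => (aeval_Ψ i).trans (eval_iterate_derivative_pLform_of_lt_mwg hg hi))
    ((aeval_Ψ _).trans_ne (eval_iterate_derivative_pLform_mwg_ne_zero hΦ hg))
  exact ⟨H, hH, by rw [← hΨ, hΨH]⟩

/-- If `g^w` is algebraic over `K^w` and the ideal `I(A^w, g^w)` (the kernel of the
substitution map `A^w[y] → k[x]`, `y ↦ g^w`) is principal with generator `P`, then
`Φ^{w,g} = P^m · H` for some `H ∈ A^w[y]` with `H ∉ I(A^w, g^w)`, where `m = m_w^g(Φ)`. -/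
theorem stmt6 (A : Subalgebra k (MvPolynomial (Fin n) k))
    (Φ : Polynomial (MvPolynomial (Fin n) k)) (hΦ : Φ ≠ 0) (hΦA : ∀ i, Φ.coeff i ∈ A)
    (g : MvPolynomial (Fin n) k) (hg : g ≠ 0) (w : Fin n → Γ)
    (halg : IsAlgebraic (KW w A)
      (algebraMap (MvPolynomial (Fin n) k) (FractionRing (MvPolynomial (Fin n) k))
        (lform w g)))
    (P : Polynomial (initAlg w A))
    (hP : RingHom.ker
        (Polynomial.aeval (lform w g) :
          Polynomial (initAlg w A) →ₐ[initAlg w A] MvPolynomial (Fin n) k)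
      = Ideal.span {P}) :
    ∃ H : Polynomial (initAlg w A),
      (Polynomial.aeval (lform w g) H : MvPolynomial (Fin n) k) ≠ 0 ∧
      pLform w g Φ =
        Polynomial.map (algebraMap (initAlg w A) (MvPolynomial (Fin n) k))
          (P ^ (mwg w g Φ) * H) :=
  stmt6_general A Φ hΦ hΦA g hg w P hP
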